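/- arXiv:2203.02455 — 2 statements merged into one kernel-verified Lean document; each statement's English description precedes it below -/
import Mathlib

section
/- For every integer η ≥ 1 there exists a connected trivially perfect graph G (a connected graph with no induced subgraph isomorphic to P_4 or C_4) whose distance matrix has nullity exactly η. -/
open SimpleGraph

/-- The distance matrix of a finite simple graph, over ℚ: the `(u,v)` entry is the
graph distance between `u` and `v`. -/
noncomputable def distMatrix {V : Type*} [Fintype V] (G : SimpleGraph V) : Matrix V V ℚ :=
  fun u v => (G.dist u v : ℚ)

/-!
Take the cone over `η + 1` disjoint copies of the star `K_{1,4}`. In an induced `P₄` or `C₄`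
every vertex has a non-neighbour among the other three, so the apex is not used and the four
vertices would lie in a single star, which has no path on four vertices.

Having an apex, the graph has diameter two, so `D = 2(J - I) - A`. Solving `D x = 0` row by row:
the apex row gives `∑ x = x(apex)`, a leaf row expresses the leaf value through the apex and its
centre, and then the row of any centre forces `x(apex) = 0`. Hence `x` is determined by its values
`a_c` at the centres, the leaves of star `c` carry `-a_c / 2`, and `∑ a_c = 0`; conversely every
such vector is in the kernel, because with four leaves per star the centre rows hold identically.
The nullity is therefore `η`.
-/

open Matrix Module

theorem Matrix.rank_add_finrank_ker {m n K : Type*} [Fintype n] [Field K] (A : Matrix m n K) :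
    A.rank + finrank K (LinearMap.ker A.mulVecLin) = Fintype.card n := by
  rw [rank, LinearMap.finrank_range_add_finrank_ker, finrank_fintype_fun_eq_card]

namespace SimpleGraph

variable {V W : Type*} {G : SimpleGraph V} {H : SimpleGraph W}

theorem Hom.edist_le (f : G →g H) (u v : V) : H.edist (f u) (f v) ≤ G.edist u v := by
  by_cases h : G.Reachable u v
  · obtain ⟨p, hp⟩ := h.exists_walk_length_eq_edist
    exact hp ▸ (SimpleGraph.edist_le (p.map f)).trans_eq (by rw [Walk.length_map])
  · rw [edist_eq_top_of_not_reachable h]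
    exact le_top

theorem Iso.edist_eq (f : G ≃g H) (u v : V) : H.edist (f u) (f v) = G.edist u v :=
  le_antisymm (Hom.edist_le f.toHom u v) <| by
    simpa using Hom.edist_le f.symm.toHom (f u) (f v)

theorem Iso.dist_eq (f : G ≃g H) (u v : V) : H.dist (f u) (f v) = G.dist u v := by
  rw [dist, dist, f.edist_eq]

theorem Iso.rank_distMatrix [Fintype V] [Fintype W] (f : G ≃g H) :
    (distMatrix H).rank = (distMatrix G).rank := by
  have : distMatrix G = (distMatrix H).submatrix f.toEquiv f.toEquiv := by
    ext u v
    simp [distMatrix, f.dist_eq]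
  rw [this, rank_submatrix]

section Apex

variable {r : V} (hr : ∀ v, v ≠ r → G.Adj r v)
include hr

theorem connected_of_forall_adj : G.Connected := by
  have hreach (v : V) : G.Reachable r v := by
    rcases eq_or_ne v r with rfl | hv
    · rfl
    · exact (hr v hv).reachable
  have : Nonempty V := ⟨r⟩
  exact ⟨fun u v => (hreach u).symm.trans (hreach v)⟩

theorem dist_eq_two_of_forall_adj {u v : V} (huv : u ≠ v) (hadj : ¬G.Adj u v) :
    G.dist u v = 2 := by
  have hu : u ≠ r := by rintro rfl; exact hadj (hr v huv.symm)
  have hv : v ≠ r := by rintro rfl; exact hadj (hr u huv).symm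
  have hle : G.dist u v ≤ 2 := dist_le (.cons (hr u hu).symm (.cons (hr v hv) .nil))
  have hlt : 1 < G.dist u v := (connected_of_forall_adj hr).one_lt_dist_of_ne_of_not_adj huv hadj
  omega

theorem distMatrix_mulVec_of_forall_adj [Fintype V] [DecidableEq V] [DecidableRel G.Adj]
    (x : V → ℚ) (v : V) :
    (distMatrix G *ᵥ x) v = 2 * ∑ w, x w - 2 * x v - (G.adjMatrix ℚ *ᵥ x) v := by
  have hentry (w : V) :
      distMatrix G v w = 2 - 2 * (1 : Matrix V V ℚ) v w - G.adjMatrix ℚ v w := by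
    rcases eq_or_ne v w with rfl | hvw
    · simp [distMatrix]
    by_cases hadj : G.Adj v w
    · norm_num [distMatrix, dist_eq_one_iff_adj.mpr hadj, hvw, hadj]
    · simp [distMatrix, dist_eq_two_of_forall_adj hr hvw hadj, hvw, hadj]
  simp only [mulVec, dotProduct, hentry, sub_mul, Finset.sum_sub_distrib, mul_assoc,
    ← Finset.mul_sum]
  simp [one_apply]

end Apex

/-- The cone over `ι` disjoint copies of the star `K_{1,κ}`: `none` is the apex, `some (c, none)`
the centre of the `c`-th star and `some (c, some k)` its leaves. -/
def coneOverStars (ι κ : Type*) : SimpleGraph (Option (ι × Option κ)) where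
  Adj u v := u ≠ v ∧ ∀ p ∈ u, ∀ q ∈ v, p.1 = q.1 ∧ (p.2 = none ∨ q.2 = none)
  symm := ⟨fun _ _ h =>
    ⟨h.1.symm, fun q hq p hp => ⟨(h.2 p hp q hq).1.symm, (h.2 p hp q hq).2.symm⟩⟩⟩
  loopless := ⟨fun _ h => h.1 rfl⟩

variable {ι κ : Type*}

instance [DecidableEq ι] [DecidableEq κ] : DecidableRel (coneOverStars ι κ).Adj :=
  fun _ _ => inferInstanceAs (Decidable (_ ≠ _ ∧ ∀ p ∈ _, ∀ q ∈ _, _))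

namespace coneOverStars

@[simp] theorem adj_none_some (p : ι × Option κ) : (coneOverStars ι κ).Adj none (some p) := by
  simp [coneOverStars]

@[simp] theorem adj_some_none (p : ι × Option κ) : (coneOverStars ι κ).Adj (some p) none :=
  (adj_none_some p).symm

@[simp] theorem adj_some_some {c d : ι} {i j : Option κ} :
    (coneOverStars ι κ).Adj (some (c, i)) (some (d, j)) ↔
      c = d ∧ i ≠ j ∧ (i = none ∨ j = none) := by
  simp only [coneOverStars, ne_eq, Option.mem_def, Prod.forall, Option.some.injEq,
    Prod.mk.injEq, not_and, and_imp, forall_apply_eq_imp_iff, forall_eq']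
  tauto

theorem adj_none {v : Option (ι × Option κ)} (hv : v ≠ none) :
    (coneOverStars ι κ).Adj none v := by
  obtain ⟨p, rfl⟩ := Option.ne_none_iff_exists'.mp hv
  exact adj_none_some p

theorem connected : (coneOverStars ι κ).Connected :=
  connected_of_forall_adj fun _ => adj_none

theorem ne_none_of_not_adj {u v : Option (ι × Option κ)} (huv : u ≠ v)
    (h : ¬(coneOverStars ι κ).Adj u v) : u ≠ none := by
  rintro rfl
  exact h (adj_none huv.symm)

theorem eq_or_eq_of_adj_of_adj_of_adj {a b c d : Option (ι × Option κ)}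
    (hab : (coneOverStars ι κ).Adj a b) (hbc : (coneOverStars ι κ).Adj b c)
    (hcd : (coneOverStars ι κ).Adj c d) (hac : ¬(coneOverStars ι κ).Adj a c)
    (hbd : ¬(coneOverStars ι κ).Adj b d) : a = c ∨ b = d := by
  by_contra! hne
  obtain ⟨⟨ca, ia⟩, rfl⟩ := Option.ne_none_iff_exists'.mp (ne_none_of_not_adj hne.1 hac)
  obtain ⟨⟨cb, ib⟩, rfl⟩ := Option.ne_none_iff_exists'.mp (ne_none_of_not_adj hne.2 hbd)
  obtain ⟨⟨cc, ic⟩, rfl⟩ := Option.ne_none_iff_exists'.mp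
    (ne_none_of_not_adj hne.1.symm fun h => hac h.symm)
  obtain ⟨⟨cd, id⟩, rfl⟩ := Option.ne_none_iff_exists'.mp
    (ne_none_of_not_adj hne.2.symm fun h => hbd h.symm)
  simp only [adj_some_some, ne_eq, Option.some.injEq, Prod.mk.injEq] at *
  grind

theorem not_isIndContained {H : SimpleGraph (Fin 4)} (h01 : H.Adj 0 1) (h12 : H.Adj 1 2)
    (h23 : H.Adj 2 3) (h02 : ¬H.Adj 0 2) (h13 : ¬H.Adj 1 3) : ¬H ⊴ coneOverStars ι κ := by
  rintro ⟨f⟩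
  rcases eq_or_eq_of_adj_of_adj_of_adj (f.map_adj_iff.2 h01) (f.map_adj_iff.2 h12)
    (f.map_adj_iff.2 h23) (mt f.map_adj_iff.1 h02) (mt f.map_adj_iff.1 h13) with h | h
  · exact absurd (f.injective h) (by decide)
  · exact absurd (f.injective h) (by decide)

theorem not_pathGraph_isIndContained : ¬pathGraph 4 ⊴ coneOverStars ι κ := by
  apply not_isIndContained <;> simp [pathGraph_adj]

theorem not_cycleGraph_isIndContained : ¬cycleGraph 4 ⊴ coneOverStars ι κ := by
  apply not_isIndContained <;> decide

variable (ι κ) in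
def liftCenters : (ι → ℚ) →ₗ[ℚ] (Option (ι × Option κ) → ℚ) where
  toFun a v := v.elim 0 fun p => p.2.elim (a p.1) fun _ => -a p.1 / 2
  map_add' a b := by
    ext (_ | ⟨c, _ | k⟩) <;>
      simp only [Pi.add_apply, Option.elim_none, Option.elim_some] <;> ring
  map_smul' r a := by
    ext (_ | ⟨c, _ | k⟩) <;>
      simp only [Pi.smul_apply, smul_eq_mul, Option.elim_none, Option.elim_some,
        RingHom.id_apply] <;> ring

@[simp] theorem liftCenters_none (a : ι → ℚ) : liftCenters ι κ a none = 0 := rfl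

@[simp] theorem liftCenters_center (a : ι → ℚ) (c : ι) :
    liftCenters ι κ a (some (c, none)) = a c := rfl

@[simp] theorem liftCenters_leaf (a : ι → ℚ) (c : ι) (k : κ) :
    liftCenters ι κ a (some (c, some k)) = -a c / 2 := rfl

theorem liftCenters_injective : Function.Injective (liftCenters ι κ) :=
  fun a b h => funext fun c => by simpa using congrFun h (some (c, none))

variable [Fintype ι] [Fintype κ]

theorem sum_eq_apex_add_sum_stars (x : Option (ι × Option κ) → ℚ) :
    ∑ v, x v = x none + ∑ c, (x (some (c, none)) + ∑ k, x (some (c, some k))) := by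
  simp [Fintype.sum_option, Fintype.sum_prod_type]

variable [DecidableEq ι] [DecidableEq κ]

theorem adjMatrix_mulVec_none (x : Option (ι × Option κ) → ℚ) :
    ((coneOverStars ι κ).adjMatrix ℚ *ᵥ x) none =
      ∑ c, (x (some (c, none)) + ∑ k, x (some (c, some k))) := by
  simp [mulVec, dotProduct, adjMatrix_apply, Fintype.sum_option, Fintype.sum_prod_type]

theorem adjMatrix_mulVec_center (x : Option (ι × Option κ) → ℚ) (c : ι) :
    ((coneOverStars ι κ).adjMatrix ℚ *ᵥ x) (some (c, none)) =
      x none + ∑ k, x (some (c, some k)) := by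
  simp [mulVec, dotProduct, adjMatrix_apply, Fintype.sum_option, Fintype.sum_prod_type]

theorem adjMatrix_mulVec_leaf (x : Option (ι × Option κ) → ℚ) (c : ι) (k : κ) :
    ((coneOverStars ι κ).adjMatrix ℚ *ᵥ x) (some (c, some k)) =
      x none + x (some (c, none)) := by
  simp [mulVec, dotProduct, adjMatrix_apply, Fintype.sum_option, Fintype.sum_prod_type]

theorem distMatrix_mulVec_liftCenters (hκ : Fintype.card κ = 4) {a : ι → ℚ}
    (ha : ∑ c, a c = 0) : distMatrix (coneOverStars ι κ) *ᵥ liftCenters ι κ a = 0 := by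
  have hstar (c : ι) : a c + ∑ _k : κ, -a c / 2 = -a c := by
    simp only [Finset.sum_const, Finset.card_univ, hκ, nsmul_eq_mul]
    ring
  have hsum : ∑ c, (a c + ∑ _k : κ, -a c / 2) = 0 := by
    simp only [hstar, Finset.sum_neg_distrib, ha, neg_zero]
  ext (_ | ⟨c, _ | k⟩)
  all_goals
    rw [distMatrix_mulVec_of_forall_adj (fun _ => adj_none), sum_eq_apex_add_sum_stars]
    simp only [adjMatrix_mulVec_none, adjMatrix_mulVec_center, adjMatrix_mulVec_leaf,
      liftCenters_none, liftCenters_center, liftCenters_leaf, hsum, Pi.zero_apply]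
  · ring
  · linarith [hstar c]
  · ring

variable [Nonempty ι]

theorem eq_liftCenters_of_distMatrix_mulVec_eq_zero (hκ : Fintype.card κ = 4)
    {x : Option (ι × Option κ) → ℚ} (hx : distMatrix (coneOverStars ι κ) *ᵥ x = 0) :
    ∑ c, x (some (c, none)) = 0 ∧ liftCenters ι κ (fun c => x (some (c, none))) = x := by
  have row (v) : 2 * ∑ w, x w - 2 * x v - ((coneOverStars ι κ).adjMatrix ℚ *ᵥ x) v = 0 := by
    rw [← distMatrix_mulVec_of_forall_adj (fun _ => adj_none)]
    exact congrFun hx v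
  have hstars : ∑ c, (x (some (c, none)) + ∑ k, x (some (c, some k))) = 0 := by
    have := row none
    rw [adjMatrix_mulVec_none, sum_eq_apex_add_sum_stars] at this
    linarith
  have hS : ∑ w, x w = x none := by rw [sum_eq_apex_add_sum_stars, hstars, add_zero]
  have hleaf (c : ι) (k : κ) : x (some (c, some k)) = (x none - x (some (c, none))) / 2 := by
    have := row (some (c, some k))
    rw [adjMatrix_mulVec_leaf, hS] at this
    linarith
  have happex : x none = 0 := by
    obtain ⟨c⟩ := ‹Nonempty ι›
    have := row (some (c, none))
    simp only [adjMatrix_mulVec_center, hS, hleaf, Finset.sum_const, Finset.card_univ, hκ,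
      nsmul_eq_mul] at this
    linarith
  refine ⟨?_, ?_⟩
  · rw [← neg_eq_zero, ← Finset.sum_neg_distrib, ← hstars]
    refine Finset.sum_congr rfl fun c _ => ?_
    simp only [hleaf, happex, Finset.sum_const, Finset.card_univ, hκ, nsmul_eq_mul]
    ring
  · ext (_ | ⟨c, _ | k⟩) <;> simp [happex, hleaf]

theorem ker_distMatrix (hκ : Fintype.card κ = 4) :
    LinearMap.ker (distMatrix (coneOverStars ι κ)).mulVecLin =
      (LinearMap.ker (Fintype.linearCombination ℚ fun _ : ι => (1 : ℚ))).map
        (liftCenters ι κ) := by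
  ext x
  simp only [LinearMap.mem_ker, mulVecLin_apply, Submodule.mem_map,
    Fintype.linearCombination_apply, smul_eq_mul, mul_one]
  constructor
  · intro hx
    exact ⟨_, eq_liftCenters_of_distMatrix_mulVec_eq_zero hκ hx⟩
  · rintro ⟨a, ha, rfl⟩
    exact distMatrix_mulVec_liftCenters hκ ha

theorem card_sub_rank_distMatrix (hκ : Fintype.card κ = 4) :
    Fintype.card (Option (ι × Option κ)) - (distMatrix (coneOverStars ι κ)).rank =
      Fintype.card ι - 1 := by
  obtain ⟨c⟩ := ‹Nonempty ι›
  have hsum_ne_zero : Fintype.linearCombination ℚ (fun _ : ι => (1 : ℚ)) ≠ 0 := fun h => by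
    simpa [Fintype.linearCombination_apply] using LinearMap.congr_fun h (Pi.single c 1)
  have hker := Module.Dual.finrank_ker_add_one_of_ne_zero hsum_ne_zero
  rw [← (distMatrix (coneOverStars ι κ)).rank_add_finrank_ker, ker_distMatrix hκ,
    ← LinearEquiv.finrank_eq (Submodule.equivMapOfInjective _ liftCenters_injective _)]
  rw [finrank_fintype_fun_eq_card] at hker
  omega

end coneOverStars
end SimpleGraph

theorem exists_triviallyPerfect_with_nullity_general (η : ℕ) :
    ∃ (n : ℕ) (G : SimpleGraph (Fin n)),
      G.Connected ∧
      (¬ Nonempty (pathGraph 4 ↪g G)) ∧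
      (¬ Nonempty (cycleGraph 4 ↪g G)) ∧
      n - (distMatrix G).rank = η := by
  let G := coneOverStars (Fin (η + 1)) (Fin 4)
  let e := Fintype.equivFin (Option (Fin (η + 1) × Option (Fin 4)))
  let f : G ≃g G.map e.toEmbedding := Iso.map e G
  refine ⟨_, G.map e.toEmbedding, f.connected_iff.mp coneOverStars.connected, ?_, ?_, ?_⟩
  · exact fun h => coneOverStars.not_pathGraph_isIndContained
      (IsIndContained.trans h ⟨f.symm.toEmbedding⟩)
  · exact fun h => coneOverStars.not_cycleGraph_isIndContained
      (IsIndContained.trans h ⟨f.symm.toEmbedding⟩)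
  · rw [f.rank_distMatrix, coneOverStars.card_sub_rank_distMatrix (Fintype.card_fin 4),
      Fintype.card_fin, Nat.add_sub_cancel]

/-- For every integer η ≥ 1 there exists a connected trivially perfect graph (a connected
graph with no induced P₄ and no induced C₄) whose distance matrix has nullity exactly η. -/
theorem exists_triviallyPerfect_with_nullity (η : ℕ) (hη : 1 ≤ η) :
    ∃ (n : ℕ) (G : SimpleGraph (Fin n)),
      G.Connected ∧
      (¬ Nonempty (pathGraph 4 ↪g G)) ∧
      (¬ Nonempty (cycleGraph 4 ↪g G)) ∧
      n - (distMatrix G).rank = η :=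
  exists_triviallyPerfect_with_nullity_general η
end

section
/- Let k ≥ 2 be an integer, r ∈ {1, 2, 3}, and n an integer with n ≥ 7k + r. Then there exists a connected trivially perfect graph G on n vertices, admitting a partition of its vertex set into 3k + r sets of true twins, such that the nullity of the distance matrix of G is either k − 1 or k; moreover, if n = 7k + r then a graph can be chosen with nullity exactly k − 1, and if r = 1 and n = 7k + 2 then a graph can be chosen with nullity exactly k. -/
open SimpleGraph

/-- Two vertices are true twins if their closed neighborhoods coincide. -/
def TrueTwins {V : Type*} (G : SimpleGraph V) (u v : V) : Prop :=
  insert u (G.neighborSet u) = insert v (G.neighborSet v)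

/-- A graph is trivially perfect if it has no induced subgraph isomorphic to the path P₄
or the cycle C₄. -/
def TriviallyPerfect {V : Type*} (G : SimpleGraph V) : Prop :=
  (¬ Nonempty (pathGraph 4 ↪g G)) ∧ (¬ Nonempty (cycleGraph 4 ↪g G))

/-- `G` admits a partition of its vertex set into `m` (nonempty) sets of pairwise
true twins. -/
def HasTrueTwinPartition {V : Type*} (G : SimpleGraph V) (m : ℕ) : Prop :=
  ∃ P : Fin m → Finset V,
    (∀ v : V, ∃! i, v ∈ P i) ∧
    (∀ i, (P i).Nonempty) ∧
    (∀ i, ∀ u ∈ P i, ∀ v ∈ P i, TrueTwins G u v)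

/-!
The graph is a blow-up of a rooted tree of classes: a root class of `c` vertices; `k` gadgets,
each a class of three vertices with two child classes of two vertices; and `r - 1` single-vertex
leaves under the root. Vertices are adjacent iff their classes are comparable in the tree order.
Comparability graphs of tree orders (every `Ici x` is a chain) have no induced `P₄` or `C₄`,
since the middle vertex of an induced `P₃` lies above both ends. The classes are sets of true
twins and the root class is universal, so `D = M - I` where `M` (entries 1 or 2) only depends on
the classes. A kernel vector of `D` is then constant on classes, which reduces the kernel to that
of the quotient matrix `M · diag(class sizes) - I`. Solving this system, the kernel is
parametrised by values `aᵢ` on the gadget roots (their children carry `-aᵢ`, the leaves `0`),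
subject only to `∑ aᵢ = 0`, except for `c = 2`, where the root class absorbs `∑ aᵢ`. The
nullity is therefore `k` for `c = 2` and `k - 1` otherwise; take `c = n - 7k - r + 1`.
-/

section TreeOrder

variable {α V : Type*} [Preorder α] (htree : ∀ x : α, IsChain (· ≤ ·) (Set.Ici x))
include htree

lemma comparable_of_le_of_le {x y z : α} (hy : x ≤ y) (hz : x ≤ z) : y ≤ z ∨ z ≤ y := by
  rcases eq_or_ne y z with rfl | hne
  · exact Or.inl le_rfl
  · exact htree x hy hz hne

lemma le_and_le_of_comparable_of_not_comparable {a b y : α} (ha : a ≤ y ∨ y ≤ a)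
    (hb : b ≤ y ∨ y ≤ b) (hab : ¬ (a ≤ b ∨ b ≤ a)) : a ≤ y ∧ b ≤ y := by
  rcases ha with ha | ha <;> rcases hb with hb | hb
  · exact ⟨ha, hb⟩
  · exact absurd (Or.inl (ha.trans hb)) hab
  · exact absurd (Or.inr (hb.trans ha)) hab
  · exact absurd (comparable_of_le_of_le htree ha hb) hab

lemma triviallyPerfect_fromRel (φ : V → α) :
    TriviallyPerfect (fromRel fun u v => φ u ≤ φ v) := by
  have adj_iff : ∀ {H : SimpleGraph (Fin 4)} (f : H ↪g fromRel fun u v => φ u ≤ φ v) (a b),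
      a ≠ b → (H.Adj a b ↔ (φ (f a) ≤ φ (f b) ∨ φ (f b) ≤ φ (f a))) := by
    intro H f a b hab
    rw [← f.map_adj_iff, fromRel_adj]
    exact and_iff_right (f.injective.ne hab)
  constructor
  · rintro ⟨f⟩
    have adj := adj_iff f
    simp only [pathGraph_adj] at adj
    have h01 := (adj 0 1 (by decide)).1 (by decide)
    have h12 := (adj 1 2 (by decide)).1 (by decide)
    have h23 := (adj 2 3 (by decide)).1 (by decide)
    have n02 := mt (adj 0 2 (by decide)).2 (by decide)
    have n13 := mt (adj 1 3 (by decide)).2 (by decide)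
    have h1 := le_and_le_of_comparable_of_not_comparable htree h01 h12.symm n02
    have h2 := le_and_le_of_comparable_of_not_comparable htree h12 h23.symm n13
    exact n02 (Or.inl (h1.1.trans h2.1))
  · rintro ⟨f⟩
    have adj := adj_iff f
    simp only [cycleGraph_adj'] at adj
    have h01 := (adj 0 1 (by decide)).1 (by decide)
    have h12 := (adj 1 2 (by decide)).1 (by decide)
    have h23 := (adj 2 3 (by decide)).1 (by decide)
    have h30 := (adj 3 0 (by decide)).1 (by decide)
    have n02 := mt (adj 0 2 (by decide)).2 (by decide)
    have n13 := mt (adj 1 3 (by decide)).2 (by decide)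
    have h1 := le_and_le_of_comparable_of_not_comparable htree h01 h12.symm n02
    have h3 := le_and_le_of_comparable_of_not_comparable htree h30.symm h23 n02
    exact n13 (comparable_of_le_of_le htree h1.1 h3.1)

end TreeOrder

open Classical in
noncomputable def classDist {α : Type*} [LE α] (x y : α) : ℚ :=
  if x ≤ y ∨ y ≤ x then 1 else 2

open Classical in
lemma sum_classDist_mul {α : Type*} [LE α] [Fintype α] (y : α) (f : α → ℚ) :
    ∑ z, classDist y z * f z = 2 * ∑ z, f z - ∑ z with y ≤ z ∨ z ≤ y, f z := by
  rw [Finset.sum_filter, Finset.mul_sum, ← Finset.sum_sub_distrib]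
  refine Finset.sum_congr rfl fun z _ => ?_
  unfold classDist
  split_ifs <;> ring

section Blowup

variable {α V : Type*} [Preorder α] (φ : V → α)

lemma trueTwins_fromRel {u v : V} (h : φ u = φ v) :
    TrueTwins (fromRel fun u v => φ u ≤ φ v) u v := by
  have closedNbhd : ∀ u : V, insert u ((fromRel fun u v => φ u ≤ φ v).neighborSet u) =
      {w | φ u ≤ φ w ∨ φ w ≤ φ u} := by
    intro u
    ext w
    by_cases hw : w = u
    · simp [hw]
    · simp [hw, Ne.symm hw]
  rw [TrueTwins, closedNbhd, closedNbhd, h]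

variable {φ} {u₀ : V} (htop : ∀ v, φ v ≤ φ u₀)
include htop

lemma connected_fromRel : (fromRel fun u v => φ u ≤ φ v).Connected := by
  refine (connected_iff_exists_forall_reachable _).2 ⟨u₀, fun v => ?_⟩
  rcases eq_or_ne v u₀ with rfl | hv
  · rfl
  · exact ((fromRel_adj _ _ _).2 ⟨hv, Or.inl (htop v)⟩).reachable.symm

lemma dist_fromRel [DecidableEq V] [DecidableLE α] (u v : V) :
    (fromRel fun u v => φ u ≤ φ v).dist u v =
      if u = v then 0 else if φ u ≤ φ v ∨ φ v ≤ φ u then 1 else 2 := by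
  set G := fromRel fun u v => φ u ≤ φ v
  split_ifs with huv hcomp
  · simp [huv]
  · exact dist_eq_one_iff_adj.2 ((fromRel_adj _ _ _).2 ⟨huv, hcomp⟩)
  · have hu : u ≠ u₀ := by rintro rfl; exact hcomp (Or.inr (htop v))
    have hv : v ≠ u₀ := by rintro rfl; exact hcomp (Or.inl (htop u))
    have hle : G.dist u v ≤ 2 :=
      G.dist_le (.cons ((fromRel_adj _ _ _).2 ⟨hu, Or.inl (htop u)⟩)
        (.cons ((fromRel_adj _ _ _).2 ⟨hv.symm, Or.inr (htop v)⟩) .nil))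
    have hlt : 1 < G.dist u v := (connected_fromRel htop).one_lt_dist_of_ne_of_not_adj huv
      fun h => hcomp ((fromRel_adj _ _ _).1 h).2
    omega

lemma distMatrix_fromRel [Fintype V] [DecidableEq V] :
    distMatrix (fromRel fun u v => φ u ≤ φ v) =
      Matrix.of (fun u v => classDist (φ u) (φ v)) - 1 := by
  classical
  ext u v
  rw [distMatrix, Matrix.sub_apply, Matrix.of_apply, Matrix.one_apply, dist_fromRel htop, classDist]
  by_cases huv : u = v
  · simp [huv]
  · by_cases hcomp : φ u ≤ φ v ∨ φ v ≤ φ u <;> simp [huv, hcomp]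

end Blowup

lemma hasTrueTwinPartition_of_surjective {α V : Type*} [Fintype α] [DecidableEq α] [Fintype V]
    {G : SimpleGraph V} {φ : V → α} (hφ : Function.Surjective φ)
    (htwins : ∀ u v, φ u = φ v → TrueTwins G u v) :
    HasTrueTwinPartition G (Fintype.card α) := by
  let ι := Fintype.equivFin α
  refine ⟨fun i => {v | φ v = ι.symm i}, fun v => ⟨ι (φ v), by simp, fun j hj => ?_⟩,
    fun i => ?_, fun i u hu v hv => ?_⟩
  · simp_all
  · obtain ⟨v, hv⟩ := hφ (ι.symm i)
    exact ⟨v, by simpa using hv⟩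
  · simp only [Finset.mem_filter, Finset.mem_univ, true_and] at hu hv
    exact htwins u v (hu.trans hv.symm)

section Kernel

open Matrix

variable {K : Type*} [Field K]

lemma card_sub_rank_eq_finrank_ker {ι : Type*} [Fintype ι] [DecidableEq ι] (A : Matrix ι ι K) :
    Fintype.card ι - A.rank = Module.finrank K (LinearMap.ker A.mulVecLin) := by
  have := LinearMap.finrank_range_add_finrank_ker A.mulVecLin
  rw [Module.finrank_fintype_fun_eq_card] at this
  rw [Matrix.rank]
  omega

lemma mem_ker_sub_one_iff {ι : Type*} [Fintype ι] [DecidableEq ι] (A : Matrix ι ι K)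
    (x : ι → K) : x ∈ LinearMap.ker (A - 1).mulVecLin ↔ A *ᵥ x = x := by
  simp [sub_eq_zero]

lemma finrank_ker_smul_sum [DecidableEq K] (k : ℕ) [NeZero k] (q : K) :
    Module.finrank K (LinearMap.ker (q • Fintype.linearCombination K fun _ : Fin k => (1 : K))) =
      if q = 0 then k else k - 1 := by
  split_ifs with hq
  · rw [hq, zero_smul, LinearMap.ker_zero, finrank_top, Module.finrank_fin_fun]
  · have hne : q • Fintype.linearCombination K (fun _ : Fin k => (1 : K)) ≠ 0 := by
      intro h
      have := LinearMap.congr_fun h (Pi.single (0 : Fin k) 1)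
      rw [LinearMap.smul_apply, Fintype.linearCombination_apply] at this
      simp_all
    have := Module.Dual.finrank_ker_add_one_of_ne_zero hne
    rw [Module.finrank_fin_fun] at this
    omega

variable {α : Type*} [Fintype α] (s : α → ℕ)

lemma sum_sigma_fin_comp_fst (F : α → K) :
    ∑ v : Σ z, Fin (s z), F v.1 = ∑ z, s z * F z := by
  simp [Fintype.sum_sigma]

lemma finrank_ker_blowup [DecidableEq α] (M : α → α → K) (hs : ∀ z, 0 < s z) :
    Module.finrank K (LinearMap.ker (of (fun u v : Σ z, Fin (s z) => M u.1 v.1) - 1).mulVecLin) =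
      Module.finrank K (LinearMap.ker (of (fun y z => M y z * s z) - 1).mulVecLin) := by
  set L := LinearMap.funLeft K K (Sigma.fst : (Σ z, Fin (s z)) → α)
  have hL : Function.Injective L :=
    LinearMap.funLeft_injective_of_surjective K K _ fun z => ⟨⟨z, ⟨0, hs z⟩⟩, rfl⟩
  suffices h : LinearMap.ker (of (fun u v : Σ z, Fin (s z) => M u.1 v.1) - 1).mulVecLin =
      (LinearMap.ker (of (fun y z => M y z * s z) - 1).mulVecLin).map L by
    rw [h, (Submodule.equivMapOfInjective L hL _).finrank_eq]
  have row : ∀ (x : (Σ z, Fin (s z)) → K) u,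
      (of (fun u v : Σ z, Fin (s z) => M u.1 v.1) *ᵥ x) u = ∑ v, M u.1 v.1 * x v :=
    fun _ _ => rfl
  have rowQuot : ∀ (w : α → K) y,
      (of (fun y z => M y z * s z) *ᵥ w) y = ∑ v : Σ z, Fin (s z), M y v.1 * w v.1 := by
    intro w y
    rw [sum_sigma_fin_comp_fst s (fun z => M y z * w z)]
    exact Finset.sum_congr rfl fun z _ => by simp only [of_apply]; ring
  ext x
  simp only [Submodule.mem_map, mem_ker_sub_one_iff]
  constructor
  · intro hx
    have hxw : ∀ u, x u = ∑ v, M u.1 v.1 * x v := fun u => by rw [← row, hx]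
    refine ⟨fun y => ∑ v, M y v.1 * x v, funext fun y => ?_, funext fun u => (hxw u).symm⟩
    rw [rowQuot]
    exact Finset.sum_congr rfl fun v _ => by rw [← hxw]
  · rintro ⟨w, hw, rfl⟩
    funext u
    rw [row]
    exact (rowQuot w u.1).symm.trans (congrFun hw u.1)

end Kernel

/-- The tree of classes: `gadget i 0` is the root of the `i`-th gadget and `gadget i 1`,
`gadget i 2` are its two children; the `extra a` are leaves directly below `root`. It is ordered
by `x ≤ y` iff `y` is `x` or an ancestor of `x`. -/
def Node (k r : ℕ) : Type := Unit ⊕ (Fin k × Fin 3) ⊕ Fin r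

namespace Node

variable {k r : ℕ}

instance : Fintype (Node k r) := inferInstanceAs (Fintype (Unit ⊕ (Fin k × Fin 3) ⊕ Fin r))

instance : DecidableEq (Node k r) :=
  inferInstanceAs (DecidableEq (Unit ⊕ (Fin k × Fin 3) ⊕ Fin r))

def root : Node k r := Sum.inl ()

def gadget (i : Fin k) (t : Fin 3) : Node k r := Sum.inr (Sum.inl (i, t))

def extra (a : Fin r) : Node k r := Sum.inr (Sum.inr a)

@[induction_eliminator]
def cases {motive : Node k r → Sort*} (root : motive root) (gadget : ∀ i t, motive (gadget i t))
    (extra : ∀ a, motive (extra a)) : ∀ x, motive x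
  | Sum.inl () => root
  | Sum.inr (Sum.inl (i, t)) => gadget i t
  | Sum.inr (Sum.inr a) => extra a

section Cases

variable {motive : Node k r → Sort*} (hr : motive root) (hg : ∀ i t, motive (gadget i t))
  (he : ∀ a, motive (extra a))

@[simp] lemma cases_root : cases hr hg he root = hr := rfl

@[simp] lemma cases_gadget (i : Fin k) (t : Fin 3) : cases hr hg he (gadget i t) = hg i t := rfl

@[simp] lemma cases_extra (a : Fin r) : cases hr hg he (extra a) = he a := rfl

end Cases

@[simp] lemma gadget_inj {i j : Fin k} {s t : Fin 3} :
    (gadget i s : Node k r) = gadget j t ↔ i = j ∧ s = t := by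
  refine ⟨fun h => ?_, fun ⟨hi, hs⟩ => hi ▸ hs ▸ rfl⟩
  cases h
  exact ⟨rfl, rfl⟩

@[simp] lemma extra_inj {a b : Fin r} : (extra a : Node k r) = extra b ↔ a = b := by
  refine ⟨fun h => ?_, fun h => h ▸ rfl⟩
  cases h
  rfl

@[simp] lemma gadget_ne_root (i : Fin k) (t : Fin 3) : (gadget i t : Node k r) ≠ root := nofun
@[simp] lemma extra_ne_root (a : Fin r) : (extra a : Node k r) ≠ root := nofun
@[simp] lemma root_ne_gadget (i : Fin k) (t : Fin 3) : (root : Node k r) ≠ gadget i t := nofun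
@[simp] lemma root_ne_extra (a : Fin r) : (root : Node k r) ≠ extra a := nofun
@[simp] lemma gadget_ne_extra (i : Fin k) (t : Fin 3) (a : Fin r) :
    (gadget i t : Node k r) ≠ extra a := nofun
@[simp] lemma extra_ne_gadget (i : Fin k) (t : Fin 3) (a : Fin r) :
    (extra a : Node k r) ≠ gadget i t := nofun

lemma sum_eq {M : Type*} [AddCommMonoid M] (f : Node k r → M) :
    ∑ x, f x = f root + ∑ i, (f (gadget i 0) + f (gadget i 1) + f (gadget i 2)) +
      ∑ a, f (extra a) := by
  rw [add_assoc]
  exact (Fintype.sum_sum_type _).trans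
    (by simp [Fintype.sum_sum_type, Fintype.sum_prod_type, Fin.sum_univ_three]; rfl)

lemma card_eq : Fintype.card (Node k r) = 3 * k + r + 1 := by
  rw [← Finset.card_univ, Finset.card_eq_sum_ones, sum_eq]
  simp
  ring

instance : LE (Node k r) where
  le
  | _, Sum.inl _ => True
  | Sum.inr (Sum.inl (i, s)), Sum.inr (Sum.inl (j, t)) => i = j ∧ (t = 0 ∨ s = t)
  | Sum.inr (Sum.inr a), Sum.inr (Sum.inr b) => a = b
  | _, _ => False

@[simp] lemma le_root (x : Node k r) : x ≤ root := by induction x <;> trivial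
@[simp] lemma not_root_le_gadget (i : Fin k) (t : Fin 3) : ¬ (root : Node k r) ≤ gadget i t := id
@[simp] lemma not_root_le_extra (a : Fin r) : ¬ (root : Node k r) ≤ extra a := id
@[simp] lemma gadget_le_gadget {i j : Fin k} {s t : Fin 3} :
    (gadget i s : Node k r) ≤ gadget j t ↔ i = j ∧ (t = 0 ∨ s = t) := Iff.rfl
@[simp] lemma extra_le_extra {a b : Fin r} : (extra a : Node k r) ≤ extra b ↔ a = b := Iff.rfl
@[simp] lemma not_gadget_le_extra (i : Fin k) (t : Fin 3) (a : Fin r) :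
    ¬ (gadget i t : Node k r) ≤ extra a := id
@[simp] lemma not_extra_le_gadget (i : Fin k) (t : Fin 3) (a : Fin r) :
    ¬ (extra a : Node k r) ≤ gadget i t := id

instance : Preorder (Node k r) where
  le_refl x := by induction x <;> simp
  le_trans x y z := by induction x <;> induction y <;> induction z <;> simp <;> omega

lemma isChain_Ici (x : Node k r) : IsChain (· ≤ ·) (Set.Ici x) := by
  intro y hy z hz hne
  simp only [Set.mem_Ici] at hy hz
  induction x <;> induction y <;> induction z <;> simp at hy hz hne ⊢ <;> omega

def size (c : ℕ) : Node k r → ℕ :=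
  cases (motive := fun _ => ℕ) c (fun _ t => if t = 0 then 3 else 2) (fun _ => 1)

lemma card_sigma_size (c : ℕ) :
    Fintype.card (Σ z : Node k r, Fin (size c z)) = c + 7 * k + r := by
  simp only [Fintype.card_sigma, Fintype.card_fin]
  rw [sum_eq]
  simp [size]
  ring

open Classical

lemma comparable_root : ({z | root ≤ z ∨ z ≤ root} : Finset (Node k r)) = Finset.univ := by
  ext z
  simp

lemma comparable_gadget_zero (i : Fin k) :
    ({z | gadget i 0 ≤ z ∨ z ≤ gadget i 0} : Finset (Node k r)) =
      {root, gadget i 0, gadget i 1, gadget i 2} := by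
  ext z
  induction z <;> simp
  grind

lemma comparable_gadget_of_ne_zero {i : Fin k} {t : Fin 3} (ht : t ≠ 0) :
    ({z | gadget i t ≤ z ∨ z ≤ gadget i t} : Finset (Node k r)) =
      {root, gadget i 0, gadget i t} := by
  ext z
  induction z <;> simp
  grind

lemma comparable_extra (a : Fin r) :
    ({z | extra a ≤ z ∨ z ≤ extra a} : Finset (Node k r)) = {root, extra a} := by
  ext z
  induction z <;> simp
  omega

open Matrix

noncomputable def quotientMatrix (c : ℕ) : Matrix (Node k r) (Node k r) ℚ :=
  of fun y z => classDist y z * size c z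

section Rows

variable (c : ℕ) (w : Node k r → ℚ)

lemma quotientMatrix_mulVec (y : Node k r) : (quotientMatrix c *ᵥ w) y =
    2 * ∑ z, size c z * w z - ∑ z with y ≤ z ∨ z ≤ y, size c z * w z := by
  simp only [quotientMatrix, mulVec, dotProduct, of_apply, mul_assoc]
  exact sum_classDist_mul y _

lemma sum_size_mul : ∑ z, size c z * w z = c * w root +
    ∑ i, (3 * w (gadget i 0) + 2 * w (gadget i 1) + 2 * w (gadget i 2)) + ∑ a, w (extra a) := by
  simp [sum_eq, size]

lemma quotientMatrix_mulVec_root : (quotientMatrix c *ᵥ w) root = ∑ z, size c z * w z := by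
  rw [quotientMatrix_mulVec, comparable_root]
  ring

lemma quotientMatrix_mulVec_gadget_zero (i : Fin k) : (quotientMatrix c *ᵥ w) (gadget i 0) =
    2 * ∑ z, size c z * w z -
      (c * w root + 3 * w (gadget i 0) + 2 * w (gadget i 1) + 2 * w (gadget i 2)) := by
  rw [quotientMatrix_mulVec, comparable_gadget_zero]
  simp [Finset.sum_insert, size]
  ring

lemma quotientMatrix_mulVec_gadget_of_ne_zero (i : Fin k) {t : Fin 3} (ht : t ≠ 0) :
    (quotientMatrix c *ᵥ w) (gadget i t) =
      2 * ∑ z, size c z * w z - (c * w root + 3 * w (gadget i 0) + 2 * w (gadget i t)) := by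
  rw [quotientMatrix_mulVec, comparable_gadget_of_ne_zero ht]
  simp [Finset.sum_insert, size, ht, ht.symm]
  ring

lemma quotientMatrix_mulVec_extra (a : Fin r) : (quotientMatrix c *ᵥ w) (extra a) =
    2 * ∑ z, size c z * w z - (c * w root + w (extra a)) := by
  rw [quotientMatrix_mulVec, comparable_extra]
  simp [Finset.sum_insert, size]

end Rows

variable {c : ℕ} {w : Node k r → ℚ}

lemma sum_size_mul_of_gadget_of_extra
    (hgadget : ∀ i t, t ≠ 0 → w (gadget i t) = -w (gadget i 0))
    (hextra : ∀ a, w (extra a) = 0) :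
    ∑ z, size c z * w z = c * w root - ∑ i, w (gadget i 0) := by
  have hcopy : ∀ i,
      3 * w (gadget i 0) + 2 * w (gadget i 1) + 2 * w (gadget i 2) = -w (gadget i 0) :=
    fun i => by rw [hgadget i 1 (by decide), hgadget i 2 (by decide)]; ring
  simp only [sum_size_mul, hcopy, hextra, Finset.sum_neg_distrib, Finset.sum_const_zero]
  ring

variable (c w) in
lemma mem_ker_quotientMatrix_iff [NeZero k] :
    w ∈ LinearMap.ker (quotientMatrix c - 1).mulVecLin ↔
      (∀ i t, t ≠ 0 → w (gadget i t) = -w (gadget i 0)) ∧ (∀ a, w (extra a) = 0) ∧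
        ((c : ℚ) - 2) * w root = 0 ∧ ∑ i, w (gadget i 0) = (c - 1) * w root := by
  rw [mem_ker_sub_one_iff]
  constructor
  · intro h
    have row := congrFun h
    have hroot := row root
    rw [quotientMatrix_mulVec_root] at hroot
    have hgadget : ∀ i t, t ≠ 0 → w (gadget i t) = -w (gadget i 0) := by
      intro i t ht
      have h0 := row (gadget i 0)
      have h1 := row (gadget i 1)
      have h2 := row (gadget i 2)
      rw [quotientMatrix_mulVec_gadget_zero] at h0
      rw [quotientMatrix_mulVec_gadget_of_ne_zero _ _ _ (by decide)] at h1 h2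
      rcases (by omega : t = 1 ∨ t = 2) with rfl | rfl <;> linarith
    have h2T : 2 * ∑ z, size c z * w z = c * w root := by
      have h1 := row (gadget 0 1)
      rw [quotientMatrix_mulVec_gadget_of_ne_zero _ _ _ (by decide),
        hgadget 0 1 (by decide)] at h1
      linarith
    have hextra : ∀ a, w (extra a) = 0 := by
      intro a
      have ha := row (extra a)
      rw [quotientMatrix_mulVec_extra] at ha
      linarith
    have hT := sum_size_mul_of_gadget_of_extra (c := c) hgadget hextra
    exact ⟨hgadget, hextra, by linarith, by linarith⟩
  · rintro ⟨hgadget, hextra, hroot, hsum⟩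
    have hT : ∑ z, size c z * w z = w root := by
      rw [sum_size_mul_of_gadget_of_extra hgadget hextra, hsum]
      ring
    funext y
    induction y with
    | root => rw [quotientMatrix_mulVec_root, hT]
    | gadget i t =>
      rcases eq_or_ne t 0 with rfl | ht
      · rw [quotientMatrix_mulVec_gadget_zero, hT, hgadget i 1 (by decide),
          hgadget i 2 (by decide)]
        linarith
      · rw [quotientMatrix_mulVec_gadget_of_ne_zero _ _ _ ht, hT, hgadget i t ht]
        linarith
    | extra a =>
      rw [quotientMatrix_mulVec_extra, hT, hextra]
      linarith

lemma finrank_ker_quotientMatrix [NeZero k] (c : ℕ) :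
    Module.finrank ℚ (LinearMap.ker (quotientMatrix (k := k) (r := r) c - 1).mulVecLin) =
      if c = 2 then k else k - 1 := by
  set Ψ := (LinearMap.funLeft ℚ ℚ (fun i : Fin k => (gadget i 0 : Node k r))).comp
    (LinearMap.ker (quotientMatrix (k := k) (r := r) c - 1).mulVecLin).subtype
  have hΨ : Function.Injective Ψ := by
    rw [← LinearMap.ker_eq_bot, Submodule.eq_bot_iff]
    rintro ⟨w, hw⟩ h
    have h0 : ∀ i, w (gadget i 0) = 0 := congr_fun h
    obtain ⟨hgadget, hextra, hroot, hsum⟩ := (mem_ker_quotientMatrix_iff c w).1 hw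
    simp only [h0, Finset.sum_const_zero] at hsum
    have hu : w root = 0 := by linear_combination -hroot - hsum
    simp only [Submodule.mk_eq_zero]
    funext y
    induction y with
    | root => exact hu
    | gadget i t =>
      rcases eq_or_ne t 0 with rfl | ht
      · exact h0 i
      · rw [hgadget i t ht, h0, neg_zero, Pi.zero_apply]
    | extra a => exact hextra a
  have hrange : LinearMap.range Ψ = LinearMap.ker
      (((c : ℚ) - 2) • Fintype.linearCombination ℚ fun _ : Fin k => (1 : ℚ)) := by
    ext a
    simp only [LinearMap.mem_ker, LinearMap.smul_apply, Fintype.linearCombination_apply,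
      smul_eq_mul, mul_one]
    constructor
    · rintro ⟨⟨w, hw⟩, rfl⟩
      obtain ⟨-, -, hroot, hsum⟩ := (mem_ker_quotientMatrix_iff c w).1 hw
      simp only [Ψ, LinearMap.comp_apply, Submodule.subtype_apply, LinearMap.funLeft_apply]
      rw [hsum]
      linear_combination ((c : ℚ) - 1) * hroot
    · intro ha
      let w : Node k r → ℚ := Node.cases (motive := fun _ => ℚ)
        (if c = 2 then ∑ i, a i else 0) (fun i t => if t = 0 then a i else -a i) (fun _ => 0)
      have hw : w ∈ LinearMap.ker (quotientMatrix (k := k) (r := r) c - 1).mulVecLin := by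
        rw [mem_ker_quotientMatrix_iff]
        refine ⟨fun i t ht => by simp [w, ht], fun _ => rfl, ?_, ?_⟩
        · by_cases hc : c = 2 <;> simp [w, hc]
        · by_cases hc : c = 2
          · simp [w, hc]
            norm_num
          · have : (c : ℚ) - 2 ≠ 0 := by rw [sub_ne_zero]; exact_mod_cast hc
            simpa [w, hc, this] using ha
      exact ⟨⟨w, hw⟩, rfl⟩
  rw [← LinearMap.finrank_range_of_inj hΨ, hrange, finrank_ker_smul_sum]
  congr 1
  rw [sub_eq_zero]
  norm_cast

theorem exists_graph [NeZero k] (c n m : ℕ) (hc : 0 < c) (hn : c + 7 * k + r = n)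
    (hm : 3 * k + r + 1 = m) :
    ∃ G : SimpleGraph (Fin n), G.Connected ∧ TriviallyPerfect G ∧ HasTrueTwinPartition G m ∧
      n - (distMatrix G).rank = if c = 2 then k else k - 1 := by
  have hsize : ∀ z : Node k r, 0 < size c z := by
    intro z
    induction z <;> simp [size, hc]
    split_ifs <;> norm_num
  let e : (Σ z : Node k r, Fin (size c z)) ≃ Fin n :=
    Fintype.equivFinOfCardEq ((card_sigma_size c).trans hn)
  let φ : Fin n → Node k r := fun v => (e.symm v).1
  have htop : ∀ v, φ v ≤ φ (e ⟨root, ⟨0, hc⟩⟩) := by simp [φ]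
  have hφ : Function.Surjective φ := fun z => ⟨e ⟨z, ⟨0, hsize z⟩⟩, by simp [φ]⟩
  have hD : distMatrix (fromRel fun u v => φ u ≤ φ v) =
      (of (fun u v : Σ z : Node k r, Fin (size c z) => classDist u.1 v.1) - 1).submatrix
        e.symm e.symm := by
    ext u v
    simp [distMatrix_fromRel htop, one_apply, φ]
  refine ⟨fromRel fun u v => φ u ≤ φ v, connected_fromRel htop,
    triviallyPerfect_fromRel isChain_Ici φ, ?_, ?_⟩
  · rw [← hm, ← card_eq]
    exact hasTrueTwinPartition_of_surjective hφ fun u v => trueTwins_fromRel φ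
  · rw [hD, rank_submatrix, ← Fintype.card_fin n, ← Fintype.card_congr e,
      card_sub_rank_eq_finrank_ker, finrank_ker_blowup _ _ hsize]
    exact finrank_ker_quotientMatrix c

end Node

/-- Let k ≥ 2, r ∈ {1,2,3} and n ≥ 7k + r. Then there is a connected trivially perfect
graph on n vertices, with a partition of its vertex set into 3k + r sets of true twins,
whose distance matrix has nullity k − 1 or k; moreover if n = 7k + r such a graph exists
with nullity exactly k − 1, and if r = 1 and n = 7k + 2 such a graph exists with nullity
exactly k. -/
theorem exists_triviallyPerfect_twinPartition_nullity
    (k r n : ℕ) (hk : 2 ≤ k) (hr : r ∈ ({1, 2, 3} : Set ℕ)) (hn : 7 * k + r ≤ n) :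
    (∃ G : SimpleGraph (Fin n), G.Connected ∧ TriviallyPerfect G ∧
        HasTrueTwinPartition G (3 * k + r) ∧
        (n - (distMatrix G).rank = k - 1 ∨ n - (distMatrix G).rank = k)) ∧
    (n = 7 * k + r →
      ∃ G : SimpleGraph (Fin n), G.Connected ∧ TriviallyPerfect G ∧
        HasTrueTwinPartition G (3 * k + r) ∧ n - (distMatrix G).rank = k - 1) ∧
    (r = 1 ∧ n = 7 * k + 2 →
      ∃ G : SimpleGraph (Fin n), G.Connected ∧ TriviallyPerfect G ∧
        HasTrueTwinPartition G (3 * k + r) ∧ n - (distMatrix G).rank = k) := by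
  have hr₁ : 1 ≤ r := by rcases hr with rfl | rfl | rfl <;> norm_num
  have : NeZero k := ⟨by omega⟩
  have graph (c : ℕ) (hc : 0 < c) (hcn : c + 7 * k + (r - 1) = n) :=
    Node.exists_graph (r := r - 1) c n (3 * k + r) hc hcn (by omega)
  refine ⟨?_, fun hn' => ?_, fun ⟨hr', hn'⟩ => ?_⟩
  · obtain ⟨G, hG, hTP, hP, hnull⟩ := graph (n + 1 - 7 * k - r) (by omega) (by omega)
    exact ⟨G, hG, hTP, hP, by split_ifs at hnull <;> omega⟩
  · obtain ⟨G, hG, hTP, hP, hnull⟩ := graph 1 one_pos (by omega)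
    exact ⟨G, hG, hTP, hP, hnull⟩
  · obtain ⟨G, hG, hTP, hP, hnull⟩ := graph 2 two_pos (by omega)
    exact ⟨G, hG, hTP, hP, hnull⟩
end
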